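/- For all positive integers t and nonnegative integers n, the sum over all t-tuples (i_1,...,i_t) of nonnegative integers with i_1+...+i_t = n of binomial(2i_1,i_1)*...*binomial(2i_t,i_t) equals 4^n * binomial(n + t/2 - 1, n). -/

import Mathlib

/-!
Since `centralBinom k = (-4)^k * choose (-1/2) k` (the coefficients of `(1 - 4x)^(-1/2)`), the
sum over `t`-tuples is `(-4)^n` times the `t`-fold Chu–Vandermonde convolution of
`choose (-1/2)`, which is `choose (-t/2) n`. Reflecting the upper argument,
`(-1)^n * choose (-r) n = choose (r + n - 1) n`, gives the claim.
-/

open Finset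

/-- Generalized binomial coefficient with real upper argument. -/
noncomputable def rchoose (x : ℝ) (k : ℕ) : ℝ :=
  (∏ j ∈ Finset.range k, (x - j)) / (Nat.factorial k : ℝ)

namespace Finset.Nat

theorem sum_antidiagonalTuple_succ {M : Type*} [AddCommMonoid M] (k n : ℕ)
    (F : (Fin (k + 1) → ℕ) → M) :
    ∑ f ∈ antidiagonalTuple (k + 1) n, F f
      = ∑ p ∈ antidiagonal n, ∑ f ∈ antidiagonalTuple k p.2, F (Fin.cons p.1 f) := by
  simp only [Finset.sum_eq_multiset_sum]
  -- the list-level definition of `antidiagonalTuple (k + 1)` splits off the first coordinate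
  change (Multiset.map F (List.Nat.antidiagonalTuple (k + 1) n : Multiset _)).sum
    = (Multiset.map _ (List.Nat.antidiagonal n : Multiset (ℕ × ℕ))).sum
  simp only [List.Nat.antidiagonalTuple, Multiset.map_coe, Multiset.sum_coe, List.flatMap_def,
    List.map_flatten, List.sum_flatten, List.map_map, Function.comp_def]
  rfl

theorem sum_antidiagonalTuple_prod_choose {R : Type*} [CommRing R] [BinomialRing R] {k : ℕ}
    (r : Fin k → R) (n : ℕ) :
    ∑ f ∈ antidiagonalTuple k n, ∏ m, Ring.choose (r m) (f m)
      = Ring.choose (∑ m, r m) n := by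
  induction k generalizing n with
  | zero => cases n <;> simp
  | succ k ih =>
    simp only [sum_antidiagonalTuple_succ, Fin.prod_univ_succ, Fin.cons_zero, Fin.cons_succ,
      ← mul_sum, Fin.sum_univ_succ, ih (fun m => r m.succ)]
    exact (Ring.add_choose_eq n (Commute.all _ _)).symm

end Finset.Nat

theorem Ring.neg_pow_mul_choose_neg {R : Type*} [CommRing R] [BinomialRing R] (a r : R) (n : ℕ) :
    (-a) ^ n * Ring.choose (-r) n = a ^ n * Ring.choose (r + n - 1) n := by
  rw [Ring.choose_neg, Units.smul_def, Int.coe_negOnePow_natCast, zsmul_eq_mul, neg_pow]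
  push_cast
  rw [mul_mul_mul_comm, ← mul_pow, neg_one_mul, neg_neg, one_pow, one_mul]

theorem rchoose_eq_choose (x : ℝ) (k : ℕ) : rchoose x k = Ring.choose x k := by
  rw [Ring.choose_eq_smul, ← Polynomial.aeval_eq_smeval, Polynomial.aeval_def,
    Polynomial.eval₂_eq_eval_map, descPochhammer_map, descPochhammer_eval_eq_prod_range, rchoose,
    smul_eq_mul, div_eq_inv_mul]

theorem rchoose_succ_succ (x : ℝ) (k : ℕ) :
    rchoose (x + 1) (k + 1) = (x + 1) / (k + 1) * rchoose x k := by
  rw [rchoose, rchoose, prod_range_succ', Nat.factorial_succ]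
  push_cast
  simp_rw [add_sub_add_right_eq_sub, sub_zero]
  field_simp

theorem centralBinom_eq_four_pow_mul_rchoose (n : ℕ) :
    (n.centralBinom : ℝ) = 4 ^ n * rchoose (n - 1 / 2) n := by
  induction n with
  | zero => simp [rchoose]
  | succ n ih =>
    have hrec : ((n : ℝ) + 1) * (n + 1).centralBinom = 2 * (2 * n + 1) * n.centralBinom := by
      exact_mod_cast n.succ_mul_centralBinom_succ
    rw [Nat.cast_succ, show (n : ℝ) + 1 - 1 / 2 = n - 1 / 2 + 1 by ring, rchoose_succ_succ,
      ← mul_right_inj' (by positivity : (n : ℝ) + 1 ≠ 0), hrec, ih]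
    field_simp
    ring

theorem centralBinom_eq_neg_four_pow_mul_choose (n : ℕ) :
    (n.centralBinom : ℝ) = (-4) ^ n * Ring.choose (-(1 / 2) : ℝ) n := by
  rw [centralBinom_eq_four_pow_mul_rchoose, Ring.neg_pow_mul_choose_neg, rchoose_eq_choose]
  congr 2
  ring

theorem chang_xu_general (t : ℕ) (n : ℕ) :
    ((∑ f ∈ Finset.Nat.antidiagonalTuple t n,
        ∏ m : Fin t, Nat.centralBinom (f m) : ℕ) : ℝ)
      = 4 ^ n * rchoose ((n : ℝ) + (t : ℝ) / 2 - 1) n := by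
  have hpow : ∀ f ∈ Nat.antidiagonalTuple t n, ∏ m, (-4 : ℝ) ^ f m = (-4) ^ n :=
    fun f hf ↦ by rw [prod_pow_eq_pow_sum, Nat.mem_antidiagonalTuple.mp hf]
  push_cast
  simp_rw [centralBinom_eq_neg_four_pow_mul_choose, prod_mul_distrib]
  rw [sum_congr rfl fun f hf ↦ by rw [hpow f hf], ← mul_sum,
    Nat.sum_antidiagonalTuple_prod_choose, sum_const, card_univ, Fintype.card_fin, nsmul_eq_mul,
    show (t : ℝ) * -(1 / 2) = -(t / 2) by ring, Ring.neg_pow_mul_choose_neg, rchoose_eq_choose]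
  congr 2
  ring

theorem chang_xu (t : ℕ) (ht : 0 < t) (n : ℕ) :
    ((∑ f ∈ Finset.Nat.antidiagonalTuple t n,
        ∏ m : Fin t, Nat.centralBinom (f m) : ℕ) : ℝ)
      = 4 ^ n * rchoose ((n : ℝ) + (t : ℝ) / 2 - 1) n :=
  chang_xu_general t n
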